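/- arXiv:2211.11605 — 4 statements merged into one kernel-verified Lean document; each statement's English description precedes it below -/
import Mathlib

section
/- Let 0 < R < 1, let k be an integer with k < 1, and let f ∈ L²((0,R), |ln r|^k r dr). Define h(r) = -∫_r^R f(t) dt. Then h ∈ L²((0,R), |ln r|^{k-2} r⁻¹ dr), and there is a constant C depending only on k and R such that ∫_0^R |h(r)|² |ln r|^{k-2} r⁻¹ dr ≤ C ∫_0^R |f(r)|² |ln r|^k r dr. -/
/-! Write `L t = -log t` and `k = 1 - 2α` with `α > 0`. Cauchy–Schwarz against the weight
`L^(1-α) t`, together with `∫_r^R L^(α-1) / t dt ≤ L(r)^α / α`, gives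
`h(r)² ≤ (∫_r^R f² L^(1-α) t dt) · L(r)^α / α`.
Multiplying by `L(r)^(k-2) / r` and exchanging the order of integration leaves the inner integral
`∫_0^t L^(-α-1) / r dr = L(t)^(-α) / α`, which converges because `α > 0`; since
`(1 - α) - α = k`, this yields the inequality with `C = 1 / α² = 4 / (1 - k)²`. -/

open MeasureTheory Set

theorem hasDerivAt_neg_log_rpow_div {γ t : ℝ} (hγ : γ ≠ 0) (ht0 : 0 < t) (ht1 : t < 1) :
    HasDerivAt (fun s => -(-Real.log s) ^ γ / γ) ((-Real.log t) ^ (γ - 1) / t) t := by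
  have hL : -Real.log t ≠ 0 := (neg_pos.2 (Real.log_neg ht0 ht1)).ne'
  refine ((((Real.hasDerivAt_log ht0.ne').neg).rpow_const (p := γ) (Or.inl hL)).neg.div_const
    γ).congr_deriv ?_
  simp only [Pi.neg_apply]
  field_simp

-- The junk values `Real.log 0 = 0` and `0 ^ γ = 0` make the value at `0` equal to the limit.
theorem continuousAt_zero_neg_log_rpow {γ : ℝ} (hγ : γ < 0) :
    ContinuousAt (fun s => (-Real.log s) ^ γ) 0 := by
  rw [← continuousWithinAt_compl_self, ContinuousWithinAt, Real.log_zero, neg_zero,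
    Real.zero_rpow hγ.ne]
  have := (tendsto_rpow_neg_atTop (neg_pos.2 hγ)).comp
    (Filter.tendsto_neg_atBot_atTop.comp Real.tendsto_log_nhdsNE_zero)
  rwa [neg_neg] at this

theorem continuousOn_neg_log_rpow_Icc {γ a b : ℝ} (ha : 0 ≤ a) (hb : b < 1) (h : 0 < a ∨ γ < 0) :
    ContinuousOn (fun s => (-Real.log s) ^ γ) (Icc a b) := by
  intro x hx
  rcases (ha.trans hx.1).eq_or_lt with rfl | hx0
  · exact (continuousAt_zero_neg_log_rpow (h.resolve_left hx.1.not_gt)).continuousWithinAt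
  · exact ((Real.continuousAt_log hx0.ne').neg.rpow_const
      (Or.inl (neg_pos.2 (Real.log_neg hx0 (hx.2.trans_lt hb))).ne')).continuousWithinAt

theorem lintegral_Ioo_neg_log_rpow_sub_one_div {γ a b : ℝ} (hγ : γ ≠ 0) (ha : 0 ≤ a) (hab : a ≤ b)
    (hb : b < 1) (h : 0 < a ∨ γ < 0) :
    ∫⁻ t in Ioo a b, ENNReal.ofReal ((-Real.log t) ^ (γ - 1) / t) =
      ENNReal.ofReal (((-Real.log a) ^ γ - (-Real.log b) ^ γ) / γ) := by
  have hG : ContinuousOn (fun s => -(-Real.log s) ^ γ / γ) (Icc a b) :=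
    (continuousOn_neg_log_rpow_Icc ha hb h).neg.div_const γ
  have hderiv : ∀ t ∈ Ioo a b, HasDerivAt (fun s => -(-Real.log s) ^ γ / γ)
      ((-Real.log t) ^ (γ - 1) / t) t := fun t ht =>
    hasDerivAt_neg_log_rpow_div hγ (ha.trans_lt ht.1) (ht.2.trans hb)
  have hnonneg : ∀ t ∈ Ioo a b, 0 ≤ (-Real.log t) ^ (γ - 1) / t := fun t ht =>
    div_nonneg (Real.rpow_nonneg (neg_nonneg.2 (Real.log_nonpos (ha.trans ht.1.le)
      (ht.2.trans hb).le)) _) (ha.trans ht.1.le)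
  have hint := intervalIntegral.integrableOn_deriv_of_nonneg hG hderiv hnonneg
  rw [← ofReal_integral_eq_lintegral_ofReal (hint.mono_set Ioo_subset_Ioc_self)
      ((ae_restrict_iff' measurableSet_Ioo).2 (ae_of_all _ hnonneg)),
    ← integral_Ioc_eq_integral_Ioo, ← intervalIntegral.integral_of_le hab,
    intervalIntegral.integral_eq_sub_of_hasDerivAt_of_le hab hG hderiv
      ((intervalIntegrable_iff_integrableOn_Ioc_of_le hab).2 hint)]
  congr 1
  ring

theorem lintegral_Ioo_neg_log_rpow_sub_one_div_le {α r R : ℝ} (hα : 0 < α) (hr : 0 < r)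
    (hrR : r ≤ R) (hR : R < 1) :
    ∫⁻ t in Ioo r R, ENNReal.ofReal ((-Real.log t) ^ (α - 1) / t) ≤
      ENNReal.ofReal ((-Real.log r) ^ α / α) := by
  rw [lintegral_Ioo_neg_log_rpow_sub_one_div hα.ne' hr.le hrR hR (Or.inl hr)]
  have : 0 ≤ (-Real.log R) ^ α :=
    Real.rpow_nonneg (neg_nonneg.2 (Real.log_nonpos (hr.le.trans hrR) hR.le)) α
  gcongr
  linarith

theorem lintegral_Ioo_zero_neg_log_rpow_neg_sub_one_div {α t : ℝ} (hα : 0 < α) (ht0 : 0 ≤ t)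
    (ht : t < 1) :
    ∫⁻ r in Ioo 0 t, ENNReal.ofReal ((-Real.log r) ^ (-α - 1) / r) =
      ENNReal.ofReal ((-Real.log t) ^ (-α) / α) := by
  rw [lintegral_Ioo_neg_log_rpow_sub_one_div (neg_ne_zero.2 hα.ne') le_rfl ht0 ht
    (Or.inr (neg_neg_of_pos hα)), Real.log_zero, neg_zero, Real.zero_rpow (neg_ne_zero.2 hα.ne'),
    zero_sub, neg_div_neg_eq]

theorem enorm_eq_rpow_mul_rpow {x w : ℝ} (hw : 0 < w) :
    ‖x‖ₑ = ENNReal.ofReal (x ^ 2 * w) ^ (1 / 2 : ℝ) * ENNReal.ofReal w⁻¹ ^ (1 / 2 : ℝ) := by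
  rw [← ENNReal.mul_rpow_of_nonneg _ _ (by norm_num), ← ENNReal.ofReal_mul (by positivity),
    mul_inv_cancel_right₀ hw.ne', ENNReal.ofReal_rpow_of_nonneg (sq_nonneg x) (by norm_num),
    ← Real.sqrt_eq_rpow, Real.sqrt_sq_eq_abs, Real.enorm_eq_ofReal_abs]

theorem sq_lintegral_enorm_le_weighted {X : Type*} [MeasurableSpace X] {μ : Measure X} {f w : X → ℝ}
    (hf : AEMeasurable f μ) (hw : AEMeasurable w μ) (hw0 : ∀ᵐ x ∂μ, 0 < w x) :
    (∫⁻ x, ‖f x‖ₑ ∂μ) ^ 2 ≤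
      (∫⁻ x, ENNReal.ofReal (f x ^ 2 * w x) ∂μ) * ∫⁻ x, ENNReal.ofReal (w x)⁻¹ ∂μ := by
  have hCS := ENNReal.lintegral_mul_norm_pow_le (μ := μ)
    (f := fun x => ENNReal.ofReal (f x ^ 2 * w x)) (g := fun x => ENNReal.ofReal (w x)⁻¹)
    (by fun_prop) (by fun_prop) (p := 1 / 2) (q := 1 / 2) (by norm_num) (by norm_num) (by norm_num)
  rw [← lintegral_congr_ae (hw0.mono fun x hx => enorm_eq_rpow_mul_rpow (x := f x) hx)] at hCS
  calc (∫⁻ x, ‖f x‖ₑ ∂μ) ^ 2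
      ≤ ((∫⁻ x, ENNReal.ofReal (f x ^ 2 * w x) ∂μ) ^ (1 / 2 : ℝ) *
          (∫⁻ x, ENNReal.ofReal (w x)⁻¹ ∂μ) ^ (1 / 2 : ℝ)) ^ 2 := by gcongr
    _ = _ := by
      rw [mul_pow, ← ENNReal.rpow_natCast, ← ENNReal.rpow_natCast, ← ENNReal.rpow_mul,
        ← ENNReal.rpow_mul]
      norm_num

theorem lintegral_Ioo_lintegral_Ioo_mul_comm {F W : ℝ → ENNReal} (hF : Measurable F)
    (hW : Measurable W) (a b : ℝ) :
    ∫⁻ r in Ioo a b, (∫⁻ t in Ioo r b, F t) * W r =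
      ∫⁻ t in Ioo a b, F t * ∫⁻ r in Ioo a t, W r := by
  set T : Set (ℝ × ℝ) := {p | a < p.1 ∧ p.1 < p.2 ∧ p.2 < b}
  set G := T.indicator fun p => F p.2 * W p.1
  have hT : MeasurableSet T := (measurableSet_lt measurable_const measurable_fst).inter
    ((measurableSet_lt measurable_fst measurable_snd).inter
      (measurableSet_lt measurable_snd measurable_const))
  have hG : Measurable G := ((hF.comp measurable_snd).mul (hW.comp measurable_fst)).indicator hT
  have hsection_fst (r : ℝ) : (Ioo a b).indicator (fun r => (∫⁻ t in Ioo r b, F t) * W r) r =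
      ∫⁻ t, G (r, t) := by
    by_cases hr : r ∈ Ioo a b
    · rw [indicator_of_mem hr, ← lintegral_mul_const _ hF, ← lintegral_indicator measurableSet_Ioo]
      simp only [G, T, indicator_apply, mem_Ioo, mem_ofPred_eq, hr.1, true_and]
    · rw [indicator_of_notMem hr, eq_comm]
      exact (lintegral_congr fun t =>
        indicator_of_notMem (fun h => hr ⟨h.1, h.2.1.trans h.2.2⟩) _).trans lintegral_zero
  have hsection_snd (t : ℝ) : (Ioo a b).indicator (fun t => F t * ∫⁻ r in Ioo a t, W r) t =
      ∫⁻ r, G (r, t) := by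
    by_cases ht : t ∈ Ioo a b
    · rw [indicator_of_mem ht, ← lintegral_const_mul _ hW, ← lintegral_indicator measurableSet_Ioo]
      simp only [G, T, indicator_apply, mem_Ioo, mem_ofPred_eq, ht.2, and_true]
    · rw [indicator_of_notMem ht, eq_comm]
      exact (lintegral_congr fun r =>
        indicator_of_notMem (fun h => ht ⟨h.1.trans h.2.1, h.2.2⟩) _).trans lintegral_zero
  rw [← lintegral_indicator measurableSet_Ioo, ← lintegral_indicator measurableSet_Ioo]
  simp only [hsection_fst, hsection_snd]
  exact lintegral_lintegral_swap hG.aemeasurable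

theorem ofReal_sq_integral_Ioo_le {f : ℝ → ℝ} (hf : Measurable f) {α r R : ℝ} (hα : 0 < α)
    (hr : 0 < r) (hrR : r ≤ R) (hR : R < 1) :
    ENNReal.ofReal ((∫ t in Ioo r R, f t) ^ 2) ≤
      (∫⁻ t in Ioo r R, ENNReal.ofReal (f t ^ 2 * ((-Real.log t) ^ (1 - α) * t))) *
        ENNReal.ofReal ((-Real.log r) ^ α / α) := by
  have hL : ∀ t ∈ Ioo r R, 0 < -Real.log t := fun t ht =>
    neg_pos.2 (Real.log_neg (hr.trans ht.1) (ht.2.trans hR))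
  have hweight_inv : EqOn (fun t => ENNReal.ofReal ((-Real.log t) ^ (1 - α) * t)⁻¹)
      (fun t => ENNReal.ofReal ((-Real.log t) ^ (α - 1) / t)) (Ioo r R) := fun t ht => by
    simp only [mul_inv, ← Real.rpow_neg (hL t ht).le, neg_sub, div_eq_mul_inv]
  calc ENNReal.ofReal ((∫ t in Ioo r R, f t) ^ 2)
      = ‖∫ t in Ioo r R, f t‖ₑ ^ 2 := by
        rw [Real.enorm_eq_ofReal_abs, ← ENNReal.ofReal_pow (abs_nonneg _), sq_abs]
    _ ≤ (∫⁻ t in Ioo r R, ‖f t‖ₑ) ^ 2 := by gcongr; exact enorm_integral_le_lintegral_enorm _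
    _ ≤ (∫⁻ t in Ioo r R, ENNReal.ofReal (f t ^ 2 * ((-Real.log t) ^ (1 - α) * t))) *
          ∫⁻ t in Ioo r R, ENNReal.ofReal ((-Real.log t) ^ (1 - α) * t)⁻¹ :=
        sq_lintegral_enorm_le_weighted hf.aemeasurable (by fun_prop)
          ((ae_restrict_iff' measurableSet_Ioo).2 (ae_of_all _ fun t ht =>
            mul_pos (Real.rpow_pos_of_pos (hL t ht) _) (hr.trans ht.1)))
    _ ≤ _ := by
        rw [setLIntegral_congr_fun measurableSet_Ioo hweight_inv]
        gcongr
        exact lintegral_Ioo_neg_log_rpow_sub_one_div_le hα hr hrR hR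

theorem ofReal_sq_integral_Ioo_mul_weight_le {f : ℝ → ℝ} (hf : Measurable f) {α r R : ℝ}
    (hα : 0 < α) (hr : 0 < r) (hrR : r ≤ R) (hR : R < 1) :
    ENNReal.ofReal ((∫ t in Ioo r R, f t) ^ 2 * (-Real.log r) ^ (-1 - 2 * α) / r) ≤
      ENNReal.ofReal (1 / α) *
        ((∫⁻ t in Ioo r R, ENNReal.ofReal (f t ^ 2 * ((-Real.log t) ^ (1 - α) * t))) *
          ENNReal.ofReal ((-Real.log r) ^ (-α - 1) / r)) := by
  have hL : 0 < -Real.log r := neg_pos.2 (Real.log_neg hr (hrR.trans_lt hR))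
  have hweight : (-Real.log r) ^ α / α * ((-Real.log r) ^ (-1 - 2 * α) / r) =
      1 / α * ((-Real.log r) ^ (-α - 1) / r) := by
    rw [show -α - 1 = α + (-1 - 2 * α) by ring, Real.rpow_add hL]
    ring
  calc ENNReal.ofReal ((∫ t in Ioo r R, f t) ^ 2 * (-Real.log r) ^ (-1 - 2 * α) / r)
      = ENNReal.ofReal ((∫ t in Ioo r R, f t) ^ 2) *
          ENNReal.ofReal ((-Real.log r) ^ (-1 - 2 * α) / r) := by
        rw [mul_div_assoc, ENNReal.ofReal_mul (sq_nonneg _)]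
    _ ≤ (∫⁻ t in Ioo r R, ENNReal.ofReal (f t ^ 2 * ((-Real.log t) ^ (1 - α) * t))) *
          ENNReal.ofReal ((-Real.log r) ^ α / α) *
          ENNReal.ofReal ((-Real.log r) ^ (-1 - 2 * α) / r) := by
        gcongr
        exact ofReal_sq_integral_Ioo_le hf hα hr hrR hR
    _ = _ := by
        rw [mul_assoc, ← ENNReal.ofReal_mul (by positivity), hweight,
          ENNReal.ofReal_mul (by positivity)]
        ring

theorem lintegral_sq_integral_Ioo_mul_neg_log_rpow_le {f : ℝ → ℝ} (hf : Measurable f) {α R : ℝ}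
    (hα : 0 < α) (hR : R < 1) :
    ∫⁻ r in Ioo 0 R, ENNReal.ofReal ((∫ t in Ioo r R, f t) ^ 2 * (-Real.log r) ^ (-1 - 2 * α) / r) ≤
      ENNReal.ofReal (1 / α ^ 2) *
        ∫⁻ r in Ioo 0 R, ENNReal.ofReal (f r ^ 2 * (-Real.log r) ^ (1 - 2 * α) * r) := by
  set F := fun t => ENNReal.ofReal (f t ^ 2 * ((-Real.log t) ^ (1 - α) * t))
  set W := fun r => ENNReal.ofReal ((-Real.log r) ^ (-α - 1) / r)
  have hinner : EqOn (fun t => F t * ∫⁻ r in Ioo 0 t, W r)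
      (fun t => ENNReal.ofReal (1 / α) *
        ENNReal.ofReal (f t ^ 2 * (-Real.log t) ^ (1 - 2 * α) * t)) (Ioo 0 R) := fun t ht => by
    have hL : 0 < -Real.log t := neg_pos.2 (Real.log_neg ht.1 (ht.2.trans hR))
    have ht0 := ht.1
    have hweight : (-Real.log t) ^ (1 - α) * t * ((-Real.log t) ^ (-α) / α) =
        1 / α * ((-Real.log t) ^ (1 - 2 * α) * t) := by
      rw [show 1 - 2 * α = 1 - α + -α by ring, Real.rpow_add hL]
      ring
    simp only [F, W]
    rw [lintegral_Ioo_zero_neg_log_rpow_neg_sub_one_div hα ht.1.le (ht.2.trans hR),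
      ← ENNReal.ofReal_mul (by positivity), mul_assoc, hweight,
      ← ENNReal.ofReal_mul (by positivity)]
    congr 1
    ring
  calc _ ≤ ∫⁻ r in Ioo 0 R, ENNReal.ofReal (1 / α) * ((∫⁻ t in Ioo r R, F t) * W r) :=
        setLIntegral_mono' measurableSet_Ioo fun r hr =>
          ofReal_sq_integral_Ioo_mul_weight_le hf hα hr.1 hr.2.le hR
    _ = ENNReal.ofReal (1 / α) * ∫⁻ t in Ioo 0 R, F t * ∫⁻ r in Ioo 0 t, W r := by
        rw [lintegral_const_mul' _ _ ENNReal.ofReal_ne_top,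
          lintegral_Ioo_lintegral_Ioo_mul_comm (by fun_prop) (by fun_prop)]
    _ = _ := by
        rw [setLIntegral_congr_fun measurableSet_Ioo hinner,
          lintegral_const_mul' _ _ ENNReal.ofReal_ne_top, ← mul_assoc,
          ← ENNReal.ofReal_mul (by positivity)]
        congr 2
        ring

theorem weighted_hardy_log_klt_one_general
    (R : ℝ) (hR1 : R < 1) (k : ℤ) (hk : k < 1) :
    ∃ C : ℝ, 0 < C ∧
      ∀ f : ℝ → ℝ, Measurable f →
        (∫⁻ r in Ioo (0 : ℝ) R,
            ENNReal.ofReal ((f r) ^ 2 * |Real.log r| ^ k * r)) < ⊤ →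
        (∫⁻ r in Ioo (0 : ℝ) R,
            ENNReal.ofReal ((-∫ t in Ioo r R, f t) ^ 2 * |Real.log r| ^ (k - 2) / r)) ≤
          ENNReal.ofReal C *
            ∫⁻ r in Ioo (0 : ℝ) R,
              ENNReal.ofReal ((f r) ^ 2 * |Real.log r| ^ k * r) := by
  set α : ℝ := (1 - k) / 2
  have hk' : (k : ℝ) < 1 := by exact_mod_cast hk
  have hα : 0 < α := div_pos (sub_pos.2 hk') two_pos
  have hweight (n : ℤ) : ∀ r ∈ Ioo 0 R, |Real.log r| ^ n = (-Real.log r) ^ (n : ℝ) :=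
    fun r hr => by rw [abs_of_neg (Real.log_neg hr.1 (hr.2.trans hR1)), Real.rpow_intCast]
  refine ⟨1 / α ^ 2, by positivity, fun f hf _ => ?_⟩
  calc _ = ∫⁻ r in Ioo 0 R,
        ENNReal.ofReal ((∫ t in Ioo r R, f t) ^ 2 * (-Real.log r) ^ (-1 - 2 * α) / r) :=
        setLIntegral_congr_fun measurableSet_Ioo fun r hr => by
          rw [hweight (k - 2) r hr, neg_sq]
          congr 4
          push_cast
          ring
    _ ≤ _ := lintegral_sq_integral_Ioo_mul_neg_log_rpow_le hf hα hR1
    _ = _ := by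
        refine congrArg _ (setLIntegral_congr_fun measurableSet_Ioo fun r hr => ?_)
        rw [hweight k r hr]
        congr 4
        ring

/-- **Weighted Hardy-type inequality with logarithmic weights (case `k < 1`).**
For `0 < R < 1`, an integer `k < 1`, and `f ∈ L²((0,R), |ln r|^k r dr)`,
the primitive `h(r) = -∫_r^R f(t) dt` lies in `L²((0,R), |ln r|^{k-2} r⁻¹ dr)`
with `∫ |h|² |ln r|^{k-2} r⁻¹ ≤ C ∫ |f|² |ln r|^k r`, for a constant `C`
depending only on `k` and `R`. -/
theorem weighted_hardy_log_klt_one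
    (R : ℝ) (hR0 : 0 < R) (hR1 : R < 1) (k : ℤ) (hk : k < 1) :
    ∃ C : ℝ, 0 < C ∧
      ∀ f : ℝ → ℝ, Measurable f →
        (∫⁻ r in Ioo (0 : ℝ) R,
            ENNReal.ofReal ((f r) ^ 2 * |Real.log r| ^ k * r)) < ⊤ →
        (∫⁻ r in Ioo (0 : ℝ) R,
            ENNReal.ofReal ((-∫ t in Ioo r R, f t) ^ 2 * |Real.log r| ^ (k - 2) / r)) ≤
          ENNReal.ofReal C *
            ∫⁻ r in Ioo (0 : ℝ) R,
              ENNReal.ofReal ((f r) ^ 2 * |Real.log r| ^ k * r) :=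
  weighted_hardy_log_klt_one_general R hR1 k hk
end

section
/- Let 0 < R < 1, let k be an integer with k > 1, and let f be measurable on (0,R) with ∫_0^R |f(r)|² |ln r|^k r dr < ∞. Define h(r) = ∫_0^r f(t) dt. Then ∫_0^R |h(r)|² |ln r|^{k-2} r⁻¹ dr ≤ C ∫_0^R |f(r)|² |ln r|^k r dr for a constant C depending only on k and R. -/
/-!
Write `L = -log`, which is positive on `(0, 1)`, and `σ = (k - 1) / 2`. Cauchy–Schwarz with the
weight `t L(t)^(σ+1)` gives `h(r)² ≤ σ⁻¹ L(r)^(-σ) ∫₀ʳ f² t L^(σ+1)`. Integrating this against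
`L(r)^(k-2) / r` and exchanging the order of integration leaves the inner integral
`∫ₜᴿ L^(σ-1) / r ≤ L(t)^σ / σ`, and `L^(σ+1) L^σ = L^k`, so `C = σ⁻²` works. Both one-dimensional
integrals are computed by the substitution `u = -log t`.
-/

open MeasureTheory Set
open scoped ENNReal

theorem ENNReal.lintegral_sq_le_lintegral_sq_mul_mul_lintegral_inv {α : Type*} [MeasurableSpace α]
    {μ : Measure α} {g w : α → ℝ≥0∞} (hg : AEMeasurable g μ) (hw : AEMeasurable w μ)
    (hw0 : ∀ᵐ x ∂μ, w x ≠ 0) (hwtop : ∀ᵐ x ∂μ, w x ≠ ∞) :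
    (∫⁻ x, g x ∂μ) ^ 2 ≤ (∫⁻ x, g x ^ 2 * w x ∂μ) * ∫⁻ x, (w x)⁻¹ ∂μ := by
  have hsq : ∀ a : ℝ≥0∞, (a ^ (1 / 2 : ℝ)) ^ (2 : ℝ) = a := fun a => by
    rw [← ENNReal.rpow_mul]; norm_num
  have holder := ENNReal.lintegral_mul_le_Lp_mul_Lq μ Real.HolderConjugate.two_two
    (f := fun x => g x * w x ^ (1 / 2 : ℝ)) (g := fun x => (w x)⁻¹ ^ (1 / 2 : ℝ))
    (hg.mul (hw.pow_const _)) (hw.inv.pow_const _)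
  have hprod : ∀ᵐ x ∂μ, g x * w x ^ (1 / 2 : ℝ) * (w x)⁻¹ ^ (1 / 2 : ℝ) = g x := by
    filter_upwards [hw0, hwtop] with x hx0 hxtop
    rw [ENNReal.inv_rpow, mul_assoc, ENNReal.mul_inv_cancel (by simp [hx0]) (by simp [hxtop]),
      mul_one]
  simp only [Pi.mul_apply, lintegral_congr_ae hprod, ENNReal.mul_rpow_of_nonneg _ _ zero_le_two,
    hsq, ENNReal.rpow_two] at holder
  calc (∫⁻ x, g x ∂μ) ^ 2
      ≤ ((∫⁻ x, g x ^ 2 * w x ∂μ) ^ (1 / 2 : ℝ) * (∫⁻ x, (w x)⁻¹ ∂μ) ^ (1 / 2 : ℝ)) ^ 2 :=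
        pow_le_pow_left' holder 2
    _ = (∫⁻ x, g x ^ 2 * w x ∂μ) * ∫⁻ x, (w x)⁻¹ ∂μ := by
        rw [mul_pow, ← ENNReal.rpow_natCast, ← ENNReal.rpow_natCast, Nat.cast_ofNat, hsq, hsq]

theorem lintegral_Ioo_mul_lintegral_Ioo_swap {μ : Measure ℝ} [SFinite μ] {F G : ℝ → ℝ≥0∞}
    (hF : Measurable F) (hG : Measurable G) (a b : ℝ) :
    ∫⁻ r in Ioo a b, G r * ∫⁻ t in Ioo a r, F t ∂μ ∂μ =
      ∫⁻ t in Ioo a b, F t * ∫⁻ r in Ioo t b, G r ∂μ ∂μ := by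
  set H : ℝ × ℝ → ℝ≥0∞ := {p | p.2 < p.1}.indicator fun p => G p.1 * F p.2
  have hH : Measurable H := ((hG.comp measurable_fst).mul (hF.comp measurable_snd)).indicator
    (measurableSet_lt measurable_snd measurable_fst)
  calc ∫⁻ r in Ioo a b, G r * ∫⁻ t in Ioo a r, F t ∂μ ∂μ
      = ∫⁻ r in Ioo a b, ∫⁻ t in Ioo a b, H (r, t) ∂μ ∂μ := by
        refine setLIntegral_congr_fun measurableSet_Ioo fun r hr => ?_
        have hslice : (fun t => H (r, t)) = (Iio r).indicator fun t => G r * F t := by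
          ext t; by_cases h : t < r <;> simp [H, indicator, h]
        rw [hslice, lintegral_indicator measurableSet_Iio,
          Measure.restrict_restrict measurableSet_Iio, Iio_inter_Ioo, min_eq_left hr.2.le,
          lintegral_const_mul _ hF]
    _ = ∫⁻ t in Ioo a b, ∫⁻ r in Ioo a b, H (r, t) ∂μ ∂μ :=
        lintegral_lintegral_swap hH.aemeasurable
    _ = ∫⁻ t in Ioo a b, F t * ∫⁻ r in Ioo t b, G r ∂μ ∂μ := by
        refine setLIntegral_congr_fun measurableSet_Ioo fun t ht => ?_
        have hslice : (fun r => H (r, t)) = (Ioi t).indicator fun r => G r * F t := by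
          ext r; by_cases h : t < r <;> simp [H, indicator, h]
        rw [hslice, lintegral_indicator measurableSet_Ioi,
          Measure.restrict_restrict measurableSet_Ioi, Ioi_inter_Ioo, max_eq_left ht.1.le,
          lintegral_mul_const _ hG, mul_comm]

lemma image_neg_log_Ioo_zero {r : ℝ} (hr : 0 < r) :
    (fun t => -Real.log t) '' Ioo 0 r = Ioi (-Real.log r) := by
  rw [← image_image (g := Neg.neg), Real.image_log_Ioo_zero hr, image_neg_eq_neg, neg_Iio]

lemma image_neg_log_Ioo_one {t : ℝ} (ht0 : 0 < t) (ht1 : t ≤ 1) :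
    (fun r => -Real.log r) '' Ioo t 1 = Ioo 0 (-Real.log t) := by
  rw [← image_image (g := Neg.neg), Real.image_log_Ioo ht0 ht1, image_neg_eq_neg, neg_Ioo,
    Real.log_one, neg_zero]

lemma lintegral_inv_mul_comp_neg_log {s : Set ℝ} (hs : MeasurableSet s) (hs0 : s ⊆ Ioi 0)
    (g : ℝ → ℝ) :
    ∫⁻ t in s, ENNReal.ofReal (t⁻¹ * g (-Real.log t)) =
      ∫⁻ u in (fun t => -Real.log t) '' s, ENNReal.ofReal (g u) := by
  rw [lintegral_image_eq_lintegral_abs_deriv_mul (f := fun t => -Real.log t) hs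
    (fun t ht => ((Real.hasDerivAt_log (hs0 ht).ne').neg).hasDerivWithinAt)
    (fun a ha b hb h => Real.log_injOn_pos (hs0 ha) (hs0 hb) (neg_injective h))]
  refine setLIntegral_congr_fun hs fun t ht => ?_
  rw [← ENNReal.ofReal_mul (abs_nonneg _), abs_neg, abs_of_pos (inv_pos.2 (hs0 ht))]

lemma lintegral_Ioi_rpow_neg_sub_one {σ c : ℝ} (hσ : 0 < σ) (hc : 0 < c) :
    ∫⁻ u in Ioi c, ENNReal.ofReal (u ^ (-σ - 1)) = ENNReal.ofReal (c ^ (-σ) / σ) := by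
  have hp : -σ - 1 < -1 := by linarith
  rw [← ofReal_integral_eq_lintegral_ofReal (integrableOn_Ioi_rpow_of_lt hp hc)
    (Filter.eventually_of_mem (self_mem_ae_restrict measurableSet_Ioi)
      fun u hu => Real.rpow_nonneg (hc.trans hu).le _), integral_Ioi_rpow_of_lt hp hc]
  ring_nf

lemma lintegral_Ioo_zero_rpow_sub_one {σ d : ℝ} (hσ : 0 < σ) (hd : 0 ≤ d) :
    ∫⁻ u in Ioo 0 d, ENNReal.ofReal (u ^ (σ - 1)) = ENNReal.ofReal (d ^ σ / σ) := by
  have hp : -1 < σ - 1 := by linarith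
  have hint : IntegrableOn (fun u => u ^ (σ - 1)) (Ioo 0 d) :=
    ((intervalIntegrable_iff_integrableOn_Ioc_of_le hd).1
      (intervalIntegral.intervalIntegrable_rpow' hp)).mono_set Ioo_subset_Ioc_self
  rw [← ofReal_integral_eq_lintegral_ofReal hint
    (Filter.eventually_of_mem (self_mem_ae_restrict measurableSet_Ioo)
      fun u hu => Real.rpow_nonneg hu.1.le _), ← integral_Ioc_eq_integral_Ioo,
    ← intervalIntegral.integral_of_le hd, integral_rpow (Or.inl hp), sub_add_cancel,
    Real.zero_rpow hσ.ne', sub_zero]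

lemma lintegral_Ioo_zero_inv_mul_neg_log_rpow {σ r : ℝ} (hσ : 0 < σ) (hr0 : 0 < r) (hr1 : r < 1) :
    ∫⁻ t in Ioo 0 r, ENNReal.ofReal (t⁻¹ * (-Real.log t) ^ (-σ - 1)) =
      ENNReal.ofReal ((-Real.log r) ^ (-σ) / σ) := by
  rw [lintegral_inv_mul_comp_neg_log (g := fun u => u ^ (-σ - 1)) measurableSet_Ioo
    (fun _ ht => ht.1), image_neg_log_Ioo_zero hr0,
    lintegral_Ioi_rpow_neg_sub_one hσ (neg_pos.2 (Real.log_neg hr0 hr1))]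

lemma lintegral_Ioo_one_inv_mul_neg_log_rpow {σ t : ℝ} (hσ : 0 < σ) (ht0 : 0 < t) (ht1 : t ≤ 1) :
    ∫⁻ r in Ioo t 1, ENNReal.ofReal (r⁻¹ * (-Real.log r) ^ (σ - 1)) =
      ENNReal.ofReal ((-Real.log t) ^ σ / σ) := by
  rw [lintegral_inv_mul_comp_neg_log (g := fun u => u ^ (σ - 1)) measurableSet_Ioo
    (fun _ hr => ht0.trans hr.1), image_neg_log_Ioo_one ht0 ht1,
    lintegral_Ioo_zero_rpow_sub_one hσ (neg_nonneg.2 (Real.log_nonpos ht0.le ht1))]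

lemma ofReal_sq_integral_Ioo_zero_le {f : ℝ → ℝ} (hf : Measurable f) {σ r : ℝ} (hσ : 0 < σ)
    (hr0 : 0 < r) (hr1 : r < 1) :
    ENNReal.ofReal ((∫ t in Ioo 0 r, f t) ^ 2) ≤
      (∫⁻ t in Ioo 0 r, ENNReal.ofReal (f t ^ 2 * (t * (-Real.log t) ^ (σ + 1)))) *
        ENNReal.ofReal ((-Real.log r) ^ (-σ) / σ) := by
  set w : ℝ → ℝ := fun t => t * (-Real.log t) ^ (σ + 1)
  have hw : ∀ t ∈ Ioo 0 r, 0 < w t := fun t ht =>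
    mul_pos ht.1 (Real.rpow_pos_of_pos (neg_pos.2 (Real.log_neg ht.1 (ht.2.trans hr1))) _)
  have hwm : Measurable fun t => ENNReal.ofReal (w t) := by fun_prop
  calc ENNReal.ofReal ((∫ t in Ioo 0 r, f t) ^ 2)
      = ‖∫ t in Ioo 0 r, f t‖ₑ ^ 2 := by
        rw [Real.enorm_eq_ofReal_abs, ← ENNReal.ofReal_pow (abs_nonneg _), sq_abs]
    _ ≤ (∫⁻ t in Ioo 0 r, ‖f t‖ₑ) ^ 2 := pow_le_pow_left' (enorm_integral_le_lintegral_enorm _) 2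
    _ ≤ (∫⁻ t in Ioo 0 r, ‖f t‖ₑ ^ 2 * ENNReal.ofReal (w t)) *
          ∫⁻ t in Ioo 0 r, (ENNReal.ofReal (w t))⁻¹ :=
        ENNReal.lintegral_sq_le_lintegral_sq_mul_mul_lintegral_inv hf.enorm.aemeasurable
          hwm.aemeasurable
          ((ae_restrict_iff' measurableSet_Ioo).2 (.of_forall fun t ht =>
            (ENNReal.ofReal_pos.2 (hw t ht)).ne'))
          (.of_forall fun _ => ENNReal.ofReal_ne_top)
    _ = _ := by
        rw [← lintegral_Ioo_zero_inv_mul_neg_log_rpow hσ hr0 hr1]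
        congr 1 <;> refine setLIntegral_congr_fun measurableSet_Ioo fun t ht => ?_
        · rw [Real.enorm_eq_ofReal_abs, ← ENNReal.ofReal_pow (abs_nonneg _), sq_abs,
            ← ENNReal.ofReal_mul (sq_nonneg _)]
        · rw [← ENNReal.ofReal_inv_of_pos (hw t ht), mul_inv, ← Real.rpow_neg, neg_add']
          exact (neg_pos.2 (Real.log_neg ht.1 (ht.2.trans hr1))).le

lemma ofReal_sq_integral_mul_neg_log_rpow_le {f : ℝ → ℝ} (hf : Measurable f) {σ r : ℝ}
    (hσ : 0 < σ) (hr0 : 0 < r) (hr1 : r < 1) :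
    ENNReal.ofReal ((∫ t in Ioo 0 r, f t) ^ 2 * (-Real.log r) ^ (2 * σ - 1) / r) ≤
      ENNReal.ofReal σ⁻¹ * (ENNReal.ofReal (r⁻¹ * (-Real.log r) ^ (σ - 1)) *
        ∫⁻ t in Ioo 0 r, ENNReal.ofReal (f t ^ 2 * (t * (-Real.log t) ^ (σ + 1)))) := by
  have hL : 0 < -Real.log r := neg_pos.2 (Real.log_neg hr0 hr1)
  have hpow : (-Real.log r) ^ (-σ) / σ * ((-Real.log r) ^ (2 * σ - 1) / r) =
      σ⁻¹ * (r⁻¹ * (-Real.log r) ^ (σ - 1)) := by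
    rw [show σ - 1 = -σ + (2 * σ - 1) by ring, Real.rpow_add hL]; ring
  calc ENNReal.ofReal ((∫ t in Ioo 0 r, f t) ^ 2 * (-Real.log r) ^ (2 * σ - 1) / r)
      = ENNReal.ofReal ((∫ t in Ioo 0 r, f t) ^ 2) *
          ENNReal.ofReal ((-Real.log r) ^ (2 * σ - 1) / r) := by
        rw [mul_div_assoc, ENNReal.ofReal_mul (sq_nonneg _)]
    _ ≤ (∫⁻ t in Ioo 0 r, ENNReal.ofReal (f t ^ 2 * (t * (-Real.log t) ^ (σ + 1)))) *
          ENNReal.ofReal ((-Real.log r) ^ (-σ) / σ) *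
          ENNReal.ofReal ((-Real.log r) ^ (2 * σ - 1) / r) :=
        mul_le_mul_left (ofReal_sq_integral_Ioo_zero_le hf hσ hr0 hr1) _
    _ = _ := by
        rw [mul_assoc, ← ENNReal.ofReal_mul (by positivity), hpow,
          ENNReal.ofReal_mul (inv_nonneg.2 hσ.le)]
        ring

theorem lintegral_sq_primitive_mul_neg_log_rpow_le {f : ℝ → ℝ} (hf : Measurable f) {σ R : ℝ}
    (hσ : 0 < σ) (hR1 : R ≤ 1) :
    ∫⁻ r in Ioo 0 R,
        ENNReal.ofReal ((∫ t in Ioo 0 r, f t) ^ 2 * (-Real.log r) ^ (2 * σ - 1) / r) ≤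
      ENNReal.ofReal (σ⁻¹ * σ⁻¹) *
        ∫⁻ r in Ioo 0 R, ENNReal.ofReal (f r ^ 2 * (-Real.log r) ^ (2 * σ + 1) * r) := by
  set F : ℝ → ℝ≥0∞ := fun t => ENNReal.ofReal (f t ^ 2 * (t * (-Real.log t) ^ (σ + 1)))
  set G : ℝ → ℝ≥0∞ := fun r => ENNReal.ofReal (r⁻¹ * (-Real.log r) ^ (σ - 1))
  have tail : ∀ t ∈ Ioo 0 R, ∫⁻ r in Ioo t R, G r ≤ ENNReal.ofReal ((-Real.log t) ^ σ / σ) :=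
    fun t ht => (lintegral_mono_set (Ioo_subset_Ioo_right hR1)).trans_eq
      (lintegral_Ioo_one_inv_mul_neg_log_rpow hσ ht.1 (ht.2.le.trans hR1))
  calc ∫⁻ r in Ioo 0 R,
        ENNReal.ofReal ((∫ t in Ioo 0 r, f t) ^ 2 * (-Real.log r) ^ (2 * σ - 1) / r)
      ≤ ∫⁻ r in Ioo 0 R, ENNReal.ofReal σ⁻¹ * (G r * ∫⁻ t in Ioo 0 r, F t) :=
        setLIntegral_mono' measurableSet_Ioo fun r hr =>
          ofReal_sq_integral_mul_neg_log_rpow_le hf hσ hr.1 (hr.2.trans_le hR1)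
    _ = ENNReal.ofReal σ⁻¹ * ∫⁻ t in Ioo 0 R, F t * ∫⁻ r in Ioo t R, G r := by
        rw [lintegral_const_mul' _ _ ENNReal.ofReal_ne_top,
          lintegral_Ioo_mul_lintegral_Ioo_swap (by fun_prop) (by fun_prop)]
    _ ≤ ENNReal.ofReal σ⁻¹ *
          ∫⁻ t in Ioo 0 R, F t * ENNReal.ofReal ((-Real.log t) ^ σ / σ) :=
        mul_le_mul_right (setLIntegral_mono' measurableSet_Ioo fun t ht =>
          mul_le_mul_right (tail t ht) _) _
    _ = _ := by
        rw [ENNReal.ofReal_mul (inv_nonneg.2 hσ.le), mul_assoc]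
        congr 1
        rw [← lintegral_const_mul' _ _ ENNReal.ofReal_ne_top]
        refine setLIntegral_congr_fun measurableSet_Ioo fun t ht => ?_
        have hL : 0 < -Real.log t := neg_pos.2 (Real.log_neg ht.1 (ht.2.trans_le hR1))
        have hpow : (-Real.log t) ^ (σ + 1) * (-Real.log t) ^ σ = (-Real.log t) ^ (2 * σ + 1) := by
          rw [← Real.rpow_add hL]; ring_nf
        rw [← ENNReal.ofReal_mul
            (mul_nonneg (sq_nonneg _) (mul_nonneg ht.1.le (Real.rpow_nonneg hL.le _))),
          ← ENNReal.ofReal_mul (inv_nonneg.2 hσ.le), ← hpow]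
        ring_nf

theorem weighted_hardy_log_kgt_one_general
    (R : ℝ) (hR1 : R < 1) (k : ℤ) (hk : 1 < k) :
    ∃ C : ℝ, 0 < C ∧
      ∀ f : ℝ → ℝ, Measurable f →
        (∫⁻ r in Ioo (0 : ℝ) R,
            ENNReal.ofReal ((f r) ^ 2 * |Real.log r| ^ k * r)) < ⊤ →
        (∫⁻ r in Ioo (0 : ℝ) R,
            ENNReal.ofReal ((∫ t in Ioo (0 : ℝ) r, f t) ^ 2 * |Real.log r| ^ (k - 2) / r)) ≤
          ENNReal.ofReal C *
            ∫⁻ r in Ioo (0 : ℝ) R,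
              ENNReal.ofReal ((f r) ^ 2 * |Real.log r| ^ k * r) := by
  set σ : ℝ := ((k : ℝ) - 1) / 2
  have hσ : 0 < σ := by
    have : (1 : ℝ) < k := by exact_mod_cast hk
    simp only [σ]; linarith
  have hk_sub : ((k - 2 : ℤ) : ℝ) = 2 * σ - 1 := by push_cast [σ]; ring
  have hk_eq : (k : ℝ) = 2 * σ + 1 := by simp only [σ]; ring
  have habs : ∀ r ∈ Ioo 0 R, ∀ n : ℤ, |Real.log r| ^ n = (-Real.log r) ^ (n : ℝ) :=
    fun r hr n => by rw [abs_of_neg (Real.log_neg hr.1 (hr.2.trans hR1)), Real.rpow_intCast]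
  refine ⟨σ⁻¹ * σ⁻¹, by positivity, fun f hf _ => ?_⟩
  calc _ = ∫⁻ r in Ioo 0 R,
        ENNReal.ofReal ((∫ t in Ioo 0 r, f t) ^ 2 * (-Real.log r) ^ (2 * σ - 1) / r) :=
        setLIntegral_congr_fun measurableSet_Ioo fun r hr => by rw [habs r hr, hk_sub]
    _ ≤ ENNReal.ofReal (σ⁻¹ * σ⁻¹) *
          ∫⁻ r in Ioo 0 R, ENNReal.ofReal (f r ^ 2 * (-Real.log r) ^ (2 * σ + 1) * r) :=
        lintegral_sq_primitive_mul_neg_log_rpow_le hf hσ hR1.le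
    _ = _ := by
        congr 1
        exact setLIntegral_congr_fun measurableSet_Ioo fun r hr => by rw [habs r hr, hk_eq]

/-- **Weighted Hardy-type inequality with logarithmic weights (case `k > 1`).**
For `0 < R < 1`, an integer `k > 1`, and `f` measurable on `(0,R)` with
`∫_0^R |f|² |ln r|^k r dr < ∞`, the primitive `h(r) = ∫_0^r f(t) dt` satisfies
`∫_0^R |h|² |ln r|^{k-2} r⁻¹ dr ≤ C ∫_0^R |f|² |ln r|^k r dr` for a constant `C`
depending only on `k` and `R`. -/
theorem weighted_hardy_log_kgt_one
    (R : ℝ) (hR0 : 0 < R) (hR1 : R < 1) (k : ℤ) (hk : 1 < k) :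
    ∃ C : ℝ, 0 < C ∧
      ∀ f : ℝ → ℝ, Measurable f →
        (∫⁻ r in Ioo (0 : ℝ) R,
            ENNReal.ofReal ((f r) ^ 2 * |Real.log r| ^ k * r)) < ⊤ →
        (∫⁻ r in Ioo (0 : ℝ) R,
            ENNReal.ofReal ((∫ t in Ioo (0 : ℝ) r, f t) ^ 2 * |Real.log r| ^ (k - 2) / r)) ≤
          ENNReal.ofReal C *
            ∫⁻ r in Ioo (0 : ℝ) R,
              ENNReal.ofReal ((f r) ^ 2 * |Real.log r| ^ k * r) :=
  weighted_hardy_log_kgt_one_general R hR1 k hk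
end

section
/- Let H be a Hilbert space, d : Dom(d) ⊂ H → H a closed densely defined operator with d² = 0 (i.e. Im(d) ⊂ Ker(d) and d vanishes on Im(d) ∩ Dom(d)), and d* its adjoint. Then H decomposes orthogonally as H = (Ker(d) ∩ Ker(d*)) ⊕ closure(Im(d)) ⊕ closure(Im(d*)). -/
/-!
For densely defined `d` one has `Ker d† = (Im d)ᗮ`. If `d` is moreover closed, its graph is its
own double orthogonal complement in `H × H`, and a vector `(a, b)` orthogonal to that graph gives
`(b, -a)` in the graph of `d†`; this yields `Ker d = (Im d†)ᗮ`. So the harmonic space is the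
common orthogonal complement of `closure (Im d)` and `closure (Im d†)`, and these two are
orthogonal because `d² = 0` puts `Im d` inside `Ker d`. The decomposition is then the splitting
`H = K ⊕ Kᗮ` applied twice.
-/

open Submodule

open scoped InnerProductSpace

namespace LinearPMap

open scoped LinearPMap

variable {𝕜 E F : Type*} [RCLike 𝕜] [NormedAddCommGroup E] [InnerProductSpace 𝕜 E]
  [NormedAddCommGroup F] [InnerProductSpace 𝕜 F] {T : E →ₗ.[𝕜] F}

def ker (T : E →ₗ.[𝕜] F) : Submodule 𝕜 E :=
  (LinearMap.ker T.toFun).map T.domain.subtype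

theorem mem_ker {x : E} :
    x ∈ T.ker ↔ ∃ hx : x ∈ T.domain, T ⟨x, hx⟩ = 0 := by
  simp [ker]

def graphL2 (T : E →ₗ.[𝕜] F) : Submodule 𝕜 (WithLp 2 (E × F)) :=
  T.graph.comap (WithLp.linearEquiv 2 𝕜 (E × F)).toLinearMap

theorem isClosed_graphL2 (hT : T.IsClosed) :
    _root_.IsClosed (T.graphL2 : Set (WithLp 2 (E × F))) :=
  hT.preimage (WithLp.prodContinuousLinearEquiv 2 𝕜 E F).continuous

variable [CompleteSpace E]

theorem ker_adjoint (hT : Dense (T.domain : Set E)) :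
    T†.ker = (LinearMap.range T.toFun)ᗮ := by
  ext y
  simp only [mem_ker, mem_orthogonal', LinearMap.mem_range, forall_exists_index,
    forall_apply_eq_imp_iff, toFun_eq_coe]
  constructor
  · rintro ⟨hy, hy0⟩ x
    rw [← adjoint_isFormalAdjoint hT ⟨y, hy⟩ x, hy0, inner_zero_left]
  · intro h
    have hzero : ∀ x : T.domain, ⟪(0 : E), x⟫_𝕜 = ⟪y, T x⟫_𝕜 := fun x => by
      rw [inner_zero_left, h]
    have hy : y ∈ T†.domain := mem_adjoint_domain_of_exists y ⟨0, hzero⟩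
    exact ⟨hy, adjoint_apply_eq hT ⟨y, hy⟩ hzero⟩

theorem ker_le_orthogonal_range_adjoint (hT : Dense (T.domain : Set E)) :
    T.ker ≤ (LinearMap.range T†.toFun)ᗮ := by
  intro x hx
  obtain ⟨hx, hx0⟩ := mem_ker.1 hx
  rw [mem_orthogonal]
  rintro _ ⟨y, rfl⟩
  rw [toFun_eq_coe, adjoint_isFormalAdjoint hT y ⟨x, hx⟩, hx0, inner_zero_right]

theorem mem_graph_adjoint_of_mem_orthogonal_graphL2 (hT : Dense (T.domain : Set E))
    {v : WithLp 2 (E × F)} (hv : v ∈ T.graphL2ᗮ) :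
    ((WithLp.ofLp v).2, -(WithLp.ofLp v).1) ∈ T†.graph := by
  rw [adjoint_graph_eq_graph_adjoint hT, mem_adjoint_iff]
  intro a b hab
  have hperp := hv (WithLp.toLp 2 (a, b)) hab
  simp only [WithLp.prod_inner_apply] at hperp
  rw [inner_neg_right, sub_neg_eq_add, add_comm]
  exact hperp

variable [CompleteSpace F]

theorem mem_graph_of_forall_inner_adjoint (hT : Dense (T.domain : Set E)) (hTc : T.IsClosed)
    {x : E} {w : F} (h : ∀ y : T†.domain, ⟪T† y, x⟫_𝕜 = ⟪(y : F), w⟫_𝕜) :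
    (x, w) ∈ T.graph := by
  have : T.graphL2.HasOrthogonalProjection := by
    have := (isClosed_graphL2 hTc).completeSpace_coe
    infer_instance
  suffices WithLp.toLp 2 (x, w) ∈ T.graphL2ᗮᗮ by
    rwa [orthogonal_orthogonal] at this
  rw [mem_orthogonal]
  intro v hv
  obtain ⟨y, hy, hTy⟩ := (mem_graph_iff _).1 (mem_graph_adjoint_of_mem_orthogonal_graphL2 hT hv)
  have hxw := h y
  rw [hTy, hy, inner_neg_left, neg_eq_iff_eq_neg] at hxw
  rw [WithLp.prod_inner_apply, hxw, neg_add_cancel]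

theorem ker_eq_orthogonal_range_adjoint (hT : Dense (T.domain : Set E)) (hTc : T.IsClosed) :
    T.ker = (LinearMap.range T†.toFun)ᗮ := by
  refine le_antisymm (ker_le_orthogonal_range_adjoint hT) fun x hx => ?_
  have hgraph : (x, (0 : F)) ∈ T.graph := mem_graph_of_forall_inner_adjoint hT hTc fun y => by
    rw [inner_zero_right]
    exact (mem_orthogonal _ _).1 hx _ ⟨y, rfl⟩
  obtain ⟨y, rfl, hy0⟩ := (mem_graph_iff _).1 hgraph
  exact mem_ker.2 ⟨y.2, hy0⟩

end LinearPMap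

theorem Submodule.orthogonal_inf_sup_sup_eq_top {𝕜 E : Type*} [RCLike 𝕜] [NormedAddCommGroup E]
    [InnerProductSpace 𝕜 E] {K₁ K₂ : Submodule 𝕜 E} [K₁.HasOrthogonalProjection]
    [K₂.HasOrthogonalProjection] (h : K₁ ≤ K₂ᗮ) : K₁ᗮ ⊓ K₂ᗮ ⊔ K₁ ⊔ K₂ = ⊤ := by
  rw [sup_comm _ K₁, sup_orthogonal_inf_of_hasOrthogonalProjection h, sup_comm,
    sup_orthogonal_of_hasOrthogonalProjection]

open LinearPMap in
/-- **Weak Hodge (Kodaira) decomposition.**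
Let `d` be a closed densely defined operator on a Hilbert space `H` with
`d² = 0` (i.e. `Im(d) ⊆ Ker(d)`), and let `d† = d.adjoint`.  Then `H`
decomposes orthogonally as
`H = (Ker d ∩ Ker d†) ⊕ closure(Im d) ⊕ closure(Im d†)`. -/
theorem weak_hodge_decomposition
    {H : Type*} [NormedAddCommGroup H] [InnerProductSpace ℝ H] [CompleteSpace H]
    (d : H →ₗ.[ℝ] H)
    (hclosed : d.IsClosed)
    (hdense : Dense (d.domain : Set H))
    (hd2 : ∀ x (hx : x ∈ d.domain), ∃ h2 : d ⟨x, hx⟩ ∈ d.domain,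
      d ⟨d ⟨x, hx⟩, h2⟩ = 0) :
    letI Kerd : Submodule ℝ H := (LinearMap.ker d.toFun).map d.domain.subtype
    letI Kerdstar : Submodule ℝ H :=
      (LinearMap.ker d.adjoint.toFun).map d.adjoint.domain.subtype
    letI Harm : Submodule ℝ H := Kerd ⊓ Kerdstar
    letI Imd : Submodule ℝ H := (LinearMap.range d.toFun).topologicalClosure
    letI Imdstar : Submodule ℝ H := (LinearMap.range d.adjoint.toFun).topologicalClosure
    Harm ≤ Imdᗮ ∧ Harm ≤ Imdstarᗮ ∧ Imd ≤ Imdstarᗮ ∧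
      Harm ⊔ Imd ⊔ Imdstar = ⊤ := by
  set Imd := (LinearMap.range d.toFun).topologicalClosure
  set Imdstar := (LinearMap.range d†.toFun).topologicalClosure
  change d.ker ⊓ d†.ker ≤ _ ∧ d.ker ⊓ d†.ker ≤ _ ∧ _ ∧ d.ker ⊓ d†.ker ⊔ _ ⊔ _ = ⊤
  have hharm : d.ker ⊓ d†.ker = Imdᗮ ⊓ Imdstarᗮ := by
    rw [orthogonal_closure, orthogonal_closure, ker_eq_orthogonal_range_adjoint hdense hclosed,
      ker_adjoint hdense, inf_comm]
  have hrange_le_ker : LinearMap.range d.toFun ≤ d.ker := by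
    rintro _ ⟨x, rfl⟩
    obtain ⟨hdx, hddx⟩ := hd2 x x.2
    exact mem_ker.2 ⟨hdx, hddx⟩
  have hperp : Imd ≤ Imdstarᗮ := by
    rw [orthogonal_closure]
    exact topologicalClosure_minimal _
      (hrange_le_ker.trans (ker_le_orthogonal_range_adjoint hdense)) (isClosed_orthogonal _)
  rw [hharm]
  exact ⟨inf_le_left, inf_le_right, hperp, orthogonal_inf_sup_sup_eq_top hperp⟩
end

section
/- Let V be a finite dimensional vector space with nilpotent endomorphism N and weight filtration W_•(N). Then for every k ≤ 0, the induced map N : W_k(N) → W_{k-2}(N) is surjective, and N induces an isomorphism Gr^W_1 → Gr^W_{-1}. -/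
/-- `W` is the monodromy weight filtration of the nilpotent endomorphism `N`:
an increasing exhaustive and separated filtration indexed by `ℤ` such that
`N W_k ⊆ W_{k-2}` and `N^k` induces an isomorphism `Gr^W_k ≅ Gr^W_{-k}` for
every `k ≥ 0` (the latter expressed by injectivity and surjectivity of the
induced maps on the graded pieces). -/
def IsWeightFiltration {K V : Type*} [Field K] [AddCommGroup V] [Module K V]
    (N : Module.End K V) (W : ℤ → Submodule K V) : Prop :=
  Monotone W ∧ (∃ a : ℤ, W a = ⊥) ∧ (∃ b : ℤ, W b = ⊤) ∧
  (∀ k : ℤ, (W k).map (N : V →ₗ[K] V) ≤ W (k - 2)) ∧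
  (∀ k : ℕ,
    (∀ x ∈ W (k : ℤ), (N ^ k) x ∈ W (-(k : ℤ) - 1) → x ∈ W ((k : ℤ) - 1)) ∧
    (∀ y ∈ W (-(k : ℤ)), ∃ x ∈ W (k : ℤ), y - (N ^ k) x ∈ W (-(k : ℤ) - 1)))

/-- **Surjectivity properties of `N` on its weight filtration.**
Let `N` be nilpotent on a finite dimensional vector space over a field of
characteristic zero, with monodromy weight filtration `W_•(N)`.  Then for every
`k ≤ 0` the induced map `N : W_k → W_{k-2}` is surjective (`N(W_k) = W_{k-2}`),
and `N` induces an isomorphism `Gr^W_1 → Gr^W_{-1}` (expressed by injectivity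
and surjectivity of the induced map on graded pieces). -/
theorem weight_filtration_surjectivity
    {K V : Type*} [Field K] [CharZero K] [AddCommGroup V] [Module K V]
    [FiniteDimensional K V]
    (N : Module.End K V) (hN : IsNilpotent N)
    (W : ℤ → Submodule K V) (hW : IsWeightFiltration N W) :
    (∀ k : ℤ, k ≤ 0 → (W k).map (N : V →ₗ[K] V) = W (k - 2)) ∧
    (∀ x ∈ W 1, N x ∈ W (-2) → x ∈ W 0) ∧
    (∀ y ∈ W (-1), ∃ x ∈ W 1, y - N x ∈ W (-2)) := by
  obtain ⟨hmono, ⟨a, ha⟩, ⟨b, hb⟩, hshift, hiso⟩ := hW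
  have hpow : ∀ (i : ℕ) (c : ℤ), ∀ x ∈ W c, (N ^ i) x ∈ W (c - 2 * i) := by
    intro i
    induction i with
    | zero => intro c x hx; simpa using hx
    | succ i ih =>
      intro c x hx
      have h1 : (N ^ i) x ∈ W (c - 2 * i) := ih c x hx
      have h2 : N ((N ^ i) x) ∈ W (c - 2 * i - 2) := hshift _ ⟨_, h1, rfl⟩
      have he : (N ^ (i + 1)) x = N ((N ^ i) x) := by rw [pow_succ']; rfl
      rw [he]
      convert h2 using 2
      push_cast; ring
  have key : ∀ n : ℕ, ∀ j : ℤ, j ≤ 0 → j - 2 < a + n →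
      W (j - 2) ≤ (W j).map (N : V →ₗ[K] V) := by
    intro n
    induction n with
    | zero =>
      intro j hj hlt x hx
      have hb2 : W (j - 2) ≤ W a := hmono (by omega)
      have : x ∈ (⊥ : Submodule K V) := ha ▸ hb2 hx
      simp only [Submodule.mem_bot] at this
      simp [this]
    | succ n ih =>
      intro j hj hlt y hy
      set m : ℕ := (-j).toNat with hm
      have hjm : j = -(m : ℤ) := by omega
      have hy' : y ∈ W (-((m + 2 : ℕ) : ℤ)) := by
        have : -((m + 2 : ℕ) : ℤ) = j - 2 := by push_cast; omega
        rwa [this]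
      obtain ⟨x, hx, hd⟩ := (hiso (m + 2)).2 y hy'
      have hd' : y - (N ^ (m + 2)) x ∈ W ((j - 1) - 2) := by
        have : -((m + 2 : ℕ) : ℤ) - 1 = (j - 1) - 2 := by push_cast; omega
        rwa [this] at hd
      obtain ⟨z, hz, hNz⟩ := ih (j - 1) (by omega) (by omega) hd'
      have hw : (N ^ (m + 1)) x ∈ W j := by
        have := hpow (m + 1) ((m + 2 : ℕ) : ℤ) x hx
        have he : ((m + 2 : ℕ) : ℤ) - 2 * ((m + 1 : ℕ) : ℤ) = j := by push_cast; omega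
        rwa [he] at this
      refine ⟨(N ^ (m + 1)) x + z, Submodule.add_mem _ hw (hmono (by omega) hz), ?_⟩
      have hNw : N ((N ^ (m + 1)) x) = (N ^ (m + 2)) x := by
        rw [← Module.End.mul_apply, ← pow_succ']
      simp only [map_add]
      rw [show ((N : V →ₗ[K] V) ((N ^ (m + 1)) x) : V) = (N ^ (m + 2)) x from hNw,
        show ((N : V →ₗ[K] V) z : V) = y - (N ^ (m + 2)) x from hNz]
      abel
  refine ⟨?_, ?_, ?_⟩
  · intro k hk
    refine le_antisymm (hshift k) (key ((k - 2 - a + 1).toNat) k hk (by omega))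
  · intro x hx hNx
    have := (hiso 1).1 x (by simpa using hx) (by simpa using hNx)
    simpa using this
  · intro y hy
    obtain ⟨x, hx, hd⟩ := (hiso 1).2 y (by simpa using hy)
    exact ⟨x, by simpa using hx, by simpa using hd⟩
end
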